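/- arXiv:1611.07453 — 2 statements merged into one kernel-verified Lean document; each statement's English description precedes it below -/
import Mathlib

section
/- Let Γ be a connected finite simplicial graph with at least two vertices that is a join, let p : A_Γ → ℤ be a group homomorphism mapping every vertex of Γ to a nonzero integer, and let N = ker p. Then N is finitely generated and the distortion of N in A_Γ is linear, i.e. Dist_{A_Γ}^N ∼ n. -/
/-- The word length of `g` with respect to a set `S` of letters. -/
noncomputable def wordLength {G : Type*} [Group G] (S : Set G) (g : G) : ℕ :=
  sInf {n | ∃ l : List G, l.length = n ∧ (∀ x ∈ l, x ∈ S ∨ x⁻¹ ∈ S) ∧ l.prod = g}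

/-- The distortion function: `Dist(r) = max { |h|_T : h ∈ H, |h|_S ≤ r }`. -/
noncomputable def distortion {G : Type*} [Group G] (S T : Set G) (H : Subgroup G)
    (r : ℕ) : ℕ :=
  sSup {n | ∃ h ∈ H, wordLength S h ≤ r ∧ wordLength T h = n}

/-- `f ⪯ g`. -/
def Dominated (f g : ℕ → ℕ) : Prop :=
  ∃ A B C D : ℕ, 0 < A ∧ 0 < B ∧ 0 < C ∧ ∀ x : ℕ, D < x → f x ≤ A * g (B * x) + C * x

/-- `f ∼ g`. -/
def FEquiv (f g : ℕ → ℕ) : Prop := Dominated f g ∧ Dominated g f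

/-- The defining relators of the right-angled Artin group of a graph `Γ`. -/
def raagRels {V : Type*} (Γ : SimpleGraph V) : Set (FreeGroup V) :=
  {r | ∃ u v : V, Γ.Adj u v ∧
    r = FreeGroup.of u * FreeGroup.of v * (FreeGroup.of u)⁻¹ * (FreeGroup.of v)⁻¹}

/-- The right-angled Artin group of a graph `Γ`. -/
abbrev RAAG {V : Type*} (Γ : SimpleGraph V) : Type _ := PresentedGroup (raagRels Γ)

/-- The standard generator of `RAAG Γ` associated to a vertex. -/
def raagGen {V : Type*} (Γ : SimpleGraph V) (v : V) : RAAG Γ := PresentedGroup.of v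

/-- A graph is a join if its vertex set splits into two nonempty parts with every
vertex of one part adjacent to every vertex of the other. -/
def IsJoin {α : Type*} (Γ : SimpleGraph α) : Prop :=
  ∃ V₁ V₂ : Set α, V₁.Nonempty ∧ V₂.Nonempty ∧ Disjoint V₁ V₂ ∧ V₁ ∪ V₂ = Set.univ ∧
    ∀ u ∈ V₁, ∀ v ∈ V₂, Γ.Adj u v


/-!
Split the join as `V = V₁ ⊔ V₂` and fix `a ∈ V₁`, `b ∈ V₂`; by symmetry `|p b| ≤ |p a|`. Letters
over `V₁` commute with letters over `V₂`, so a word `w` can be rearranged as `w₁ w₂`. Walking along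
`w₁` and inserting after each letter a bounded power of `b` (which commutes with `w₁`), the height
`p` of every prefix stays in `[0, |p b|)`; the inserted powers add up to `b ^ e` with
`|e| = O(|w|)`. Walking on along `b ^ (-e) w₂` in the same way with powers of `a` keeps the
heights in `[0, |p a|)`; when `p w = 0` the final correction `a ^ e'` has `e' * p a ∈ [0, |p a|)`,
so it is trivial. Fixing lifts `s q` of the finitely many heights `q`, such a path telescopes into
`O(|w|)` kernel elements `s q * x * t ^ c * (s q')⁻¹` from a fixed finite set, which therefore
generates `ker p` with linear distortion.
-/

open Set Subgroup

theorem List.exists_prod_eq_mul_of_commute {M : Type*} [Monoid M] {L₁ L₂ : Set M}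
    (hcomm : ∀ x ∈ L₁, ∀ y ∈ L₂, Commute x y) (l : List M) (hl : ∀ x ∈ l, x ∈ L₁ ∪ L₂) :
    ∃ l₁ l₂ : List M, (∀ x ∈ l₁, x ∈ L₁) ∧ (∀ x ∈ l₂, x ∈ L₂) ∧
      l₁.length + l₂.length = l.length ∧ l₁.prod * l₂.prod = l.prod := by
  induction l with
  | nil => exact ⟨[], [], by simp, by simp, rfl, by simp⟩
  | cons x l ih =>
    obtain ⟨l₁, l₂, hl₁, hl₂, hlen, hprod⟩ := ih fun y hy => hl y (List.mem_cons_of_mem x hy)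
    rcases hl x List.mem_cons_self with hx | hx
    · refine ⟨x :: l₁, l₂, ?_, hl₂, by simp [← hlen]; omega, by simp [mul_assoc, hprod]⟩
      simpa [hx] using hl₁
    · have hxl₁ : Commute l₁.prod x :=
        Commute.list_prod_left _ _ fun y hy => hcomm y (hl₁ y hy) x hx
      refine ⟨l₁, x :: l₂, hl₁, ?_, by simp [← hlen]; omega, ?_⟩
      · simpa [hx] using hl₂
      · rw [List.prod_cons, ← mul_assoc, hxl₁.eq, mul_assoc, hprod, List.prod_cons]

theorem Int.exists_abs_le_add_mul_mem_Ico (n : ℤ) {τ : ℤ} (hτ : τ ≠ 0) :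
    ∃ c : ℤ, |c| ≤ |n| ∧ n + c * τ ∈ Ico 0 |τ| := by
  refine ⟨-(n / τ), by rw [abs_neg]; exact Int.abs_ediv_le_abs n τ, ?_⟩
  have hmod : n + -(n / τ) * τ = n % τ := by rw [Int.emod_def]; ring
  rw [hmod]
  exact ⟨Int.emod_nonneg n hτ, Int.emod_lt_abs n hτ⟩

theorem Int.eq_zero_of_mul_mem_Ico {e τ : ℤ} (hτ : τ ≠ 0) (h : e * τ ∈ Ico 0 |τ|) : e = 0 := by
  have hdvd : |τ| ∣ e * τ := (abs_dvd _ _).mpr (dvd_mul_left τ e)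
  have : e * τ = 0 := Int.eq_zero_of_abs_lt_dvd hdvd (by rw [abs_of_nonneg h.1]; exact h.2)
  simpa [hτ] using this

section Height

variable {G : Type*} [Group G] (p : G →* Multiplicative ℤ)

def height (g : G) : ℤ := Multiplicative.toAdd (p g)

@[simp] theorem height_mul (g h : G) : height p (g * h) = height p g + height p h := by
  simp [height]

@[simp] theorem height_one : height p 1 = 0 := by simp [height]

@[simp] theorem height_inv (g : G) : height p g⁻¹ = -height p g := by simp [height]

@[simp] theorem height_zpow (g : G) (c : ℤ) : height p (g ^ c) = c * height p g := by
  simp [height, toAdd_zpow]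

theorem height_eq_zero_iff {g : G} : height p g = 0 ↔ g ∈ p.ker := by
  simp [height, MonoidHom.mem_ker]

theorem exists_section_height :
    ∃ s : ℤ → G, s 0 = 1 ∧ ∀ g, height p (s (height p g)) = height p g := by
  classical
  refine ⟨fun q => if q = 0 then 1 else if h : ∃ g, height p g = q then h.choose else 1,
    by simp, fun g => ?_⟩
  by_cases hg : height p g = 0
  · simp [hg]
  · simpa [hg] using (⟨g, rfl⟩ : ∃ g', height p g' = height p g).choose_spec

/-- A kernel word whose steps lie in `B` and whose prefixes have heights in `[0, M)` telescopes
into a product of these elements. -/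
def kernelGens (s : ℤ → G) (B : Set G) (M : ℕ) : Set G :=
  (p.ker : Set G) ∩
    (fun z : ℤ × G × ℤ => s z.1 * z.2.1 * (s z.2.2)⁻¹) '' (Ico 0 (M : ℤ) ×ˢ B ×ˢ Ico 0 (M : ℤ))

variable {p}

theorem kernelGens_subset_ker {s : ℤ → G} {B : Set G} {M : ℕ} :
    kernelGens p s B M ⊆ p.ker :=
  inter_subset_left

theorem kernelGens_finite {s : ℤ → G} {B : Set G} (hB : B.Finite) (M : ℕ) :
    (kernelGens p s B M).Finite :=
  (((finite_Ico _ _).prod (hB.prod (finite_Ico _ _))).image _).inter_of_right _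

theorem mul_mul_inv_mem_kernelGens {s : ℤ → G} (hs : ∀ g, height p (s (height p g)) = height p g)
    {B : Set G} {M : ℕ} {g y : G} (hy : y ∈ B) (hg : height p g ∈ Ico 0 (M : ℤ))
    (hgy : height p (g * y) ∈ Ico 0 (M : ℤ)) :
    s (height p g) * y * (s (height p (g * y)))⁻¹ ∈ kernelGens p s B M := by
  refine ⟨(height_eq_zero_iff p).mp ?_, (height p g, y, height p (g * y)), ⟨hg, hy, hgy⟩, rfl⟩
  rw [height_mul, height_mul, height_inv, hs, hs, height_mul]
  ring

end Height

section Factorization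

variable {G : Type*} [Group G] {p : G →* Multiplicative ℤ} {s : ℤ → G} {B : Set G} {M : ℕ}

theorem exists_kernelGens_prod_eq_of_commute
    (hs : ∀ g, height p (s (height p g)) = height p g) {X : Set G} {t : G}
    (ht : height p t ≠ 0) (htM : |height p t| ≤ M)
    (hX : ∀ x ∈ X, |height p x| ≤ M ∧ Commute x t ∧ ∀ c : ℤ, |c| ≤ 2 * M → x * t ^ c ∈ B)
    (xs : List G) (hxs : ∀ x ∈ xs, x ∈ X) (g : G) (hg : height p g ∈ Ico 0 |height p t|) :
    ∃ (ts : List G) (e : ℤ), (∀ u ∈ ts, u ∈ kernelGens p s B M) ∧ ts.length = xs.length ∧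
      |e| ≤ 2 * M * xs.length ∧ height p (g * xs.prod * t ^ e) ∈ Ico 0 |height p t| ∧
      ts.prod = s (height p g) * xs.prod * t ^ e * (s (height p (g * xs.prod * t ^ e)))⁻¹ := by
  induction xs generalizing g with
  | nil => exact ⟨[], 0, by simp, rfl, by simp, by simpa using hg, by simp⟩
  | cons x xs ih =>
    obtain ⟨hxM, -, hxB⟩ := hX x (hxs x List.mem_cons_self)
    have hgM : |height p g| ≤ M := (abs_of_nonneg hg.1).trans_le (hg.2.le.trans htM)
    obtain ⟨c, hc_le, hc⟩ := Int.exists_abs_le_add_mul_mem_Ico (height p g + height p x) ht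
    have hcM : |c| ≤ 2 * M := hc_le.trans ((abs_add_le _ _).trans (by linarith))
    have hg' : height p (g * (x * t ^ c)) ∈ Ico 0 |height p t| := by simpa [add_assoc] using hc
    obtain ⟨ts, e, hts, hlen, he, hend, hprod⟩ :=
      ih (fun y hy => hxs y (List.mem_cons_of_mem x hy)) _ hg'
    have htxs : Commute (t ^ c) xs.prod := (Commute.list_prod_right _ _ fun y hy =>
      (hX y (hxs y (List.mem_cons_of_mem x hy))).2.1.symm).zpow_left c
    have hshift' : (x :: xs).prod * t ^ (c + e) = x * t ^ c * xs.prod * t ^ e := by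
      rw [List.prod_cons, zpow_add]
      simp only [mul_assoc]
      rw [← mul_assoc xs.prod, ← htxs.eq, mul_assoc]
    have hshift : g * (x :: xs).prod * t ^ (c + e) = g * (x * t ^ c) * xs.prod * t ^ e := by
      rw [mul_assoc g, hshift']
      simp only [mul_assoc]
    refine ⟨s (height p g) * (x * t ^ c) * (s (height p (g * (x * t ^ c))))⁻¹ :: ts, c + e,
      ?_, by simp [hlen], ?_, hshift ▸ hend, ?_⟩
    · intro u hu
      rcases List.mem_cons.mp hu with rfl | hu
      · have hIco : Ico 0 |height p t| ⊆ Ico 0 (M : ℤ) := Ico_subset_Ico_right htM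
        exact mul_mul_inv_mem_kernelGens hs (hxB c hcM) (hIco hg) (hIco hg')
      · exact hts u hu
    · simp only [List.length_cons, Nat.cast_add, Nat.cast_one]
      calc |c + e| ≤ |c| + |e| := abs_add_le c e
        _ ≤ 2 * M * (xs.length + 1) := by linarith
    · rw [hshift, List.prod_cons, hprod, mul_assoc (s (height p g)) (x :: xs).prod, hshift']
      group

theorem exists_kernelGens_prod_eq_of_abs_height_le (hs₀ : s 0 = 1)
    (hs : ∀ g, height p (s (height p g)) = height p g) {X₁ X₂ : Set G} {a b : G}
    (ha : height p a ≠ 0) (haM : |height p a| ≤ M) (hb : height p b ≠ 0)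
    (hba : |height p b| ≤ |height p a|)
    (hX₁ : ∀ x ∈ X₁, |height p x| ≤ M ∧ Commute x b ∧ ∀ c : ℤ, |c| ≤ 2 * M → x * b ^ c ∈ B)
    (hX₂ : ∀ x ∈ X₂, |height p x| ≤ M ∧ Commute x a ∧ ∀ c : ℤ, |c| ≤ 2 * M → x * a ^ c ∈ B)
    (hbX₂ : b ∈ X₂) (hbX₂' : b⁻¹ ∈ X₂) {l₁ l₂ : List G} (hl₁ : ∀ x ∈ l₁, x ∈ X₁)
    (hl₂ : ∀ x ∈ l₂, x ∈ X₂) (hker : l₁.prod * l₂.prod ∈ p.ker) :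
    ∃ ts : List G, (∀ u ∈ ts, u ∈ kernelGens p s B M) ∧
      ts.length ≤ (2 * M + 1) * (l₁.length + l₂.length) ∧ ts.prod = l₁.prod * l₂.prod := by
  obtain ⟨ts₁, e, hts₁, hlen₁, he, hmid, hprod₁⟩ :=
    exists_kernelGens_prod_eq_of_commute hs hb (hba.trans haM) hX₁ l₁ hl₁ 1
      (by simpa using abs_pos.mpr hb)
  rw [one_mul] at hmid hprod₁
  set bs := List.replicate e.natAbs (b ^ (-e.sign))
  have hbs : ∀ x ∈ bs, x ∈ X₂ := by
    intro x hx
    obtain ⟨he0, rfl⟩ := List.mem_replicate.mp hx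
    rcases lt_trichotomy e 0 with h | rfl | h
    · simpa [Int.sign_eq_neg_one_of_neg h] using hbX₂
    · exact absurd rfl he0
    · simpa [Int.sign_eq_one_of_pos h] using hbX₂'
  have hbs_prod : bs.prod = b ^ (-e) := by
    rw [List.prod_replicate, ← zpow_natCast, ← zpow_mul, neg_mul, Int.sign_mul_natAbs]
  obtain ⟨ts₂, e₂, hts₂, hlen₂, -, hend, hprod₂⟩ :=
    exists_kernelGens_prod_eq_of_commute hs ha haM hX₂ (bs ++ l₂)
      (fun x hx => (List.mem_append.mp hx).elim (hbs x) (hl₂ x)) (l₁.prod * b ^ e)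
      ⟨hmid.1, hmid.2.trans_le hba⟩
  have hcancel : l₁.prod * b ^ e * (bs ++ l₂).prod = l₁.prod * l₂.prod := by
    rw [List.prod_append, hbs_prod]
    group
  have hh : height p (l₁.prod * l₂.prod) = 0 := (height_eq_zero_iff p).mpr hker
  rw [hcancel] at hend hprod₂
  obtain rfl : e₂ = 0 := Int.eq_zero_of_mul_mem_Ico ha (by simpa [hh] using hend)
  refine ⟨ts₁ ++ ts₂, fun u hu => (List.mem_append.mp hu).elim (hts₁ u) (hts₂ u), ?_, ?_⟩
  · have he' : e.natAbs ≤ 2 * M * l₁.length := by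
      have : (e.natAbs : ℤ) ≤ 2 * M * l₁.length := by rw [Int.natCast_natAbs]; exact he
      exact_mod_cast this
    simp only [List.length_append, hlen₁, hlen₂, bs, List.length_replicate]
    nlinarith
  · simp only [List.prod_append, hprod₁, hprod₂, zpow_zero, mul_one, hh, height_one, hs₀,
      hbs_prod]
    group

theorem exists_kernelGens_prod_eq_mul_of_commute (hs₀ : s 0 = 1)
    (hs : ∀ g, height p (s (height p g)) = height p g) {L₁ L₂ : Set G}
    (hcomm : ∀ x ∈ L₁, ∀ y ∈ L₂, Commute x y) {a b : G} (ha : a ∈ L₁) (ha' : a⁻¹ ∈ L₁)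
    (hb : b ∈ L₂) (hb' : b⁻¹ ∈ L₂) (ha0 : height p a ≠ 0) (hb0 : height p b ≠ 0)
    (hM : ∀ x ∈ L₁ ∪ L₂, |height p x| ≤ M)
    (hB : ∀ x ∈ L₁ ∪ L₂, ∀ t ∈ ({a, b} : Set G), ∀ c : ℤ, |c| ≤ 2 * M → x * t ^ c ∈ B)
    {l₁ l₂ : List G} (hl₁ : ∀ x ∈ l₁, x ∈ L₁) (hl₂ : ∀ x ∈ l₂, x ∈ L₂)
    (hker : l₁.prod * l₂.prod ∈ p.ker) :
    ∃ ts : List G, (∀ u ∈ ts, u ∈ kernelGens p s B M) ∧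
      ts.length ≤ (2 * M + 1) * (l₁.length + l₂.length) ∧ ts.prod = l₁.prod * l₂.prod := by
  have hX₁ : ∀ x ∈ L₁, |height p x| ≤ M ∧ Commute x b ∧ ∀ c : ℤ, |c| ≤ 2 * M → x * b ^ c ∈ B :=
    fun x hx => ⟨hM x (.inl hx), hcomm x hx b hb, hB x (.inl hx) b (by simp)⟩
  have hX₂ : ∀ x ∈ L₂, |height p x| ≤ M ∧ Commute x a ∧ ∀ c : ℤ, |c| ≤ 2 * M → x * a ^ c ∈ B :=
    fun x hx => ⟨hM x (.inr hx), (hcomm a ha x hx).symm, hB x (.inr hx) a (by simp)⟩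
  rcases le_total |height p b| |height p a| with hba | hab
  · exact exists_kernelGens_prod_eq_of_abs_height_le hs₀ hs ha0 (hM a (.inl ha)) hb0 hba hX₁ hX₂
      hb hb' hl₁ hl₂ hker
  · have hcomm₁₂ : Commute l₁.prod l₂.prod := Commute.list_prod_left _ _ fun x hx =>
      Commute.list_prod_right _ _ fun y hy => hcomm x (hl₁ x hx) y (hl₂ y hy)
    obtain ⟨ts, hts, hlen, hprod⟩ := exists_kernelGens_prod_eq_of_abs_height_le hs₀ hs hb0
      (hM b (.inr hb)) ha0 hab hX₂ hX₁ ha ha' hl₂ hl₁ (hcomm₁₂.eq ▸ hker)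
    exact ⟨ts, hts, add_comm l₁.length _ ▸ hlen, hprod.trans hcomm₁₂.eq.symm⟩

end Factorization

theorem exists_finite_ker_factorization_of_commute {G : Type*} [Group G]
    (p : G →* Multiplicative ℤ) {L₁ L₂ : Set G} (hL₁ : L₁.Finite) (hL₂ : L₂.Finite)
    (hcomm : ∀ x ∈ L₁, ∀ y ∈ L₂, Commute x y) {a b : G} (ha : a ∈ L₁) (ha' : a⁻¹ ∈ L₁)
    (hb : b ∈ L₂) (hb' : b⁻¹ ∈ L₂) (hpa : p a ≠ 1) (hpb : p b ≠ 1) :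
    ∃ T₀ : Set G, T₀.Finite ∧ T₀ ⊆ p.ker ∧ ∃ K : ℕ, ∀ l : List G, (∀ x ∈ l, x ∈ L₁ ∪ L₂) →
      l.prod ∈ p.ker →
      ∃ ts : List G, (∀ u ∈ ts, u ∈ T₀) ∧ ts.length ≤ K * l.length ∧ ts.prod = l.prod := by
  obtain ⟨s, hs₀, hs⟩ := exists_section_height p
  obtain ⟨M, hM⟩ : ∃ M : ℕ, ∀ x ∈ L₁ ∪ L₂, |height p x| ≤ M := by
    obtain ⟨M, hM⟩ := ((hL₁.union hL₂).image fun x => (height p x).natAbs).bddAbove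
    exact ⟨M, fun x hx => by rw [Int.abs_eq_natAbs]; exact_mod_cast hM (mem_image_of_mem _ hx)⟩
  set B := image2 (· * ·) (L₁ ∪ L₂) (image2 (· ^ ·) {a, b} (Icc (-(2 * M : ℤ)) (2 * M)))
  have hB : B.Finite :=
    (hL₁.union hL₂).image2 _ ((((finite_singleton b).insert a)).image2 _ (finite_Icc _ _))
  have hstep : ∀ x ∈ L₁ ∪ L₂, ∀ t ∈ ({a, b} : Set G), ∀ c : ℤ, |c| ≤ 2 * M → x * t ^ c ∈ B :=
    fun x hx t ht c hc => mem_image2_of_mem hx (mem_image2_of_mem ht (abs_le.mp hc))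
  have ha0 : height p a ≠ 0 := fun h => hpa ((height_eq_zero_iff p).mp h)
  have hb0 : height p b ≠ 0 := fun h => hpb ((height_eq_zero_iff p).mp h)
  refine ⟨kernelGens p s B M, kernelGens_finite hB M, kernelGens_subset_ker, 2 * M + 1,
    fun l hl hker => ?_⟩
  obtain ⟨l₁, l₂, hl₁, hl₂, hlen, hsplit⟩ := l.exists_prod_eq_mul_of_commute hcomm hl
  obtain ⟨ts, hts, htslen, hprod⟩ := exists_kernelGens_prod_eq_mul_of_commute hs₀ hs hcomm
    ha ha' hb hb' ha0 hb0 hM hstep hl₁ hl₂ (hsplit ▸ hker)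
  exact ⟨ts, hts, hlen ▸ htslen, hprod.trans hsplit⟩

section WordLength

variable {G : Type*} [Group G] {S : Set G}

theorem wordLength_le_length {l : List G} (hl : ∀ x ∈ l, x ∈ S ∨ x⁻¹ ∈ S) :
    wordLength S l.prod ≤ l.length :=
  Nat.sInf_le ⟨l, rfl, hl, rfl⟩

theorem exists_length_eq_wordLength {g : G} (hg : g ∈ closure S) :
    ∃ l : List G, l.length = wordLength S g ∧ (∀ x ∈ l, x ∈ S ∨ x⁻¹ ∈ S) ∧ l.prod = g := by
  rw [← mem_toSubmonoid, closure_toSubmonoid] at hg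
  obtain ⟨l, hl, rfl⟩ := Submonoid.exists_list_of_mem_closure hg
  have hne : {n | ∃ l' : List G, l'.length = n ∧ (∀ x ∈ l', x ∈ S ∨ x⁻¹ ∈ S) ∧
      l'.prod = l.prod}.Nonempty :=
    ⟨l.length, l, rfl, fun x hx => (hl x hx).imp id mem_inv.mp, rfl⟩
  exact Nat.sInf_mem hne

theorem wordLength_mul_le {g h : G} (hg : g ∈ closure S) (hh : h ∈ closure S) :
    wordLength S (g * h) ≤ wordLength S g + wordLength S h := by
  obtain ⟨l, hl, hlS, rfl⟩ := exists_length_eq_wordLength hg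
  obtain ⟨l', hl', hl'S, rfl⟩ := exists_length_eq_wordLength hh
  rw [← hl, ← hl', ← List.length_append, ← List.prod_append]
  exact wordLength_le_length fun x hx => (List.mem_append.mp hx).elim (hlS x) (hl'S x)

theorem wordLength_list_prod_le {C : ℕ} {ts : List G}
    (hts : ∀ u ∈ ts, u ∈ closure S ∧ wordLength S u ≤ C) :
    wordLength S ts.prod ≤ C * ts.length := by
  induction ts with
  | nil => simpa using wordLength_le_length (S := S) (l := []) (by simp)
  | cons u ts ih =>
    have hts' := fun v hv => hts v (List.mem_cons_of_mem u hv)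
    have hu := hts u List.mem_cons_self
    calc wordLength S (u :: ts).prod
        ≤ wordLength S u + wordLength S ts.prod :=
          wordLength_mul_le hu.1 (list_prod_mem fun v hv => (hts' v hv).1)
      _ ≤ C + C * ts.length := add_le_add hu.2 (ih hts')
      _ = C * (u :: ts).length := by simp [mul_add, add_comm]

end WordLength

theorem fequiv_id_of_le_mul {f : ℕ → ℕ} {A : ℕ} (hf : ∀ n, f n ≤ A * n) :
    FEquiv f (fun n => n) :=
  ⟨⟨1, 1, A + 1, 0, one_pos, one_pos, A.succ_pos, fun n _ => by nlinarith [hf n]⟩,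
    ⟨1, 1, 1, 0, one_pos, one_pos, one_pos, fun n _ => by simp⟩⟩

theorem fg_and_fequiv_distortion_of_factorization {G : Type*} [Group G] {S : Set G}
    (hS : closure S = ⊤) {H : Subgroup G} {T₀ : Set G} (hT₀ : T₀.Finite) (hT₀H : T₀ ⊆ H)
    {K : ℕ} (hfac : ∀ l : List G, (∀ x ∈ l, x ∈ S ∨ x⁻¹ ∈ S) → l.prod ∈ H →
      ∃ ts : List G, (∀ u ∈ ts, u ∈ T₀) ∧ ts.length ≤ K * l.length ∧ ts.prod = l.prod) :
    H.FG ∧ ∀ T : Set G, closure T = H → FEquiv (distortion S T H) (fun n => n) := by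
  have hword : ∀ h ∈ H, ∃ ts : List G,
      (∀ u ∈ ts, u ∈ T₀) ∧ ts.length ≤ K * wordLength S h ∧ ts.prod = h := by
    intro h hh
    obtain ⟨l, hlen, hl, rfl⟩ := exists_length_eq_wordLength (hS ▸ mem_top h)
    exact hlen ▸ hfac l hl hh
  have hcl : closure T₀ = H := le_antisymm ((closure_le H).mpr hT₀H) fun h hh => by
    obtain ⟨ts, hts, -, rfl⟩ := hword h hh
    exact list_prod_mem fun u hu => subset_closure (hts u hu)
  refine ⟨(fg_iff H).mpr ⟨T₀, hcl, hT₀⟩, fun T hT => ?_⟩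
  obtain ⟨C, hC⟩ := (hT₀.image (wordLength T)).bddAbove
  refine fequiv_id_of_le_mul (A := C * K) fun r => csSup_le' ?_
  rintro _ ⟨h, hh, hr, rfl⟩
  obtain ⟨ts, hts, hlen, rfl⟩ := hword h hh
  calc wordLength T ts.prod
      ≤ C * ts.length := wordLength_list_prod_le fun u hu =>
        ⟨hT ▸ hT₀H (hts u hu), hC (mem_image_of_mem _ (hts u hu))⟩
    _ ≤ C * (K * r) := Nat.mul_le_mul_left C (hlen.trans (Nat.mul_le_mul_left K hr))
    _ = C * K * r := (mul_assoc _ _ _).symm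

section RAAG

variable {V : Type*} (Γ : SimpleGraph V)

theorem commute_raagGen_of_adj {u v : V} (h : Γ.Adj u v) :
    Commute (raagGen Γ u) (raagGen Γ v) := by
  have hrel : raagGen Γ u * raagGen Γ v * (raagGen Γ u)⁻¹ * (raagGen Γ v)⁻¹ = 1 :=
    PresentedGroup.one_of_mem (rels := raagRels Γ) ⟨u, v, h, rfl⟩
  exact mul_inv_eq_iff_eq_mul.mp (mul_inv_eq_one.mp hrel)

def raagLetters (U : Set V) : Set (RAAG Γ) := raagGen Γ '' U ∪ (raagGen Γ '' U)⁻¹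

theorem raagGen_mem_raagLetters {U : Set V} {v : V} (hv : v ∈ U) :
    raagGen Γ v ∈ raagLetters Γ U :=
  .inl (mem_image_of_mem _ hv)

theorem inv_raagGen_mem_raagLetters {U : Set V} {v : V} (hv : v ∈ U) :
    (raagGen Γ v)⁻¹ ∈ raagLetters Γ U :=
  .inr (inv_mem_inv.mpr (mem_image_of_mem _ hv))

theorem raagLetters_finite [Finite V] (U : Set V) : (raagLetters Γ U).Finite :=
  (U.toFinite.image _).union (U.toFinite.image _).inv

theorem commute_of_mem_raagLetters {U₁ U₂ : Set V} (hadj : ∀ u ∈ U₁, ∀ v ∈ U₂, Γ.Adj u v) :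
    ∀ x ∈ raagLetters Γ U₁, ∀ y ∈ raagLetters Γ U₂, Commute x y := by
  have hgen : ∀ x ∈ raagGen Γ '' U₁, ∀ y ∈ raagGen Γ '' U₂, Commute x y := by
    rintro _ ⟨u, hu, rfl⟩ _ ⟨v, hv, rfl⟩
    exact commute_raagGen_of_adj Γ (hadj u hu v hv)
  rintro x (hx | hx) y (hy | hy)
  · exact hgen x hx y hy
  · exact Commute.inv_right_iff.mp (hgen x hx _ hy)
  · exact Commute.inv_left_iff.mp (hgen _ hx y hy)
  · exact Commute.inv_inv_iff.mp (hgen _ hx _ hy)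

theorem raagLetters_union (U₁ U₂ : Set V) :
    raagLetters Γ (U₁ ∪ U₂) = raagLetters Γ U₁ ∪ raagLetters Γ U₂ := by
  simp only [raagLetters, image_union, union_inv]
  exact union_union_union_comm _ _ _ _

theorem raagLetters_univ : raagLetters Γ univ = range (raagGen Γ) ∪ (range (raagGen Γ))⁻¹ := by
  rw [raagLetters, image_univ]

end RAAG

theorem stmt4_general {V : Type*} [Fintype V] (Γ : SimpleGraph V)
    (hjoin : IsJoin Γ)
    (p : RAAG Γ →* Multiplicative ℤ)
    (hp : ∀ v : V, p (raagGen Γ v) ≠ 1) :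
    Subgroup.FG p.ker ∧
    ∀ T : Set (RAAG Γ), T.Finite → T ⊆ (p.ker : Set (RAAG Γ)) →
      Subgroup.closure T = p.ker →
      FEquiv (distortion (Set.range (raagGen Γ)) T p.ker) (fun n => n) := by
  obtain ⟨V₁, V₂, ⟨a, ha⟩, ⟨b, hb⟩, -, hcover, hadj⟩ := hjoin
  obtain ⟨T₀, hT₀, hT₀ker, K, hfac⟩ := exists_finite_ker_factorization_of_commute p
    (raagLetters_finite Γ V₁) (raagLetters_finite Γ V₂) (commute_of_mem_raagLetters Γ hadj)
    (raagGen_mem_raagLetters Γ ha) (inv_raagGen_mem_raagLetters Γ ha)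
    (raagGen_mem_raagLetters Γ hb) (inv_raagGen_mem_raagLetters Γ hb) (hp a) (hp b)
  obtain ⟨hfg, hdist⟩ := fg_and_fequiv_distortion_of_factorization
    (PresentedGroup.closure_range_of (raagRels Γ)) hT₀ hT₀ker fun l hl =>
      hfac l fun x hx => by
        rw [← raagLetters_union, hcover, raagLetters_univ]
        exact hl x hx
  exact ⟨hfg, fun T _ _ hT => hdist T hT⟩

theorem stmt4 {V : Type*} [Fintype V] (Γ : SimpleGraph V)
    (hconn : Γ.Connected) (hcard : 2 ≤ Fintype.card V) (hjoin : IsJoin Γ)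
    (p : RAAG Γ →* Multiplicative ℤ)
    (hp : ∀ v : V, p (raagGen Γ v) ≠ 1) :
    Subgroup.FG p.ker ∧
    ∀ T : Set (RAAG Γ), T.Finite → T ⊆ (p.ker : Set (RAAG Γ)) →
      Subgroup.closure T = p.ker →
      FEquiv (distortion (Set.range (raagGen Γ)) T p.ker) (fun n => n) :=
  stmt4_general Γ hjoin p hp
end

section
/- For each integer d ≥ 2, the distortion of F_d in G_d is bounded above by a polynomial of degree d, i.e. Dist_{G_d}^{F_d} ⪯ n^d, where G_d = ⟨x₁, …, x_d, t | t x₁ t^{-1} = x₁, t x_i t^{-1} = x_i x_{i-1}^{-1} for 2 ≤ i ≤ d⟩ and F_d is the subgroup generated by x₁, …, x_d. -/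
/-- The generator `x_{i+1}` of the free group underlying the presentation of `G_d`. -/
def gdX (d : ℕ) (i : Fin d) : FreeGroup (Fin d ⊕ Unit) := FreeGroup.of (Sum.inl i)

/-- The generator `t` of the free group underlying the presentation of `G_d`. -/
def gdT (d : ℕ) : FreeGroup (Fin d ⊕ Unit) := FreeGroup.of (Sum.inr ())

/-- The predecessor index. -/
def fpred {d : ℕ} (i : Fin d) : Fin d :=
  ⟨i.val - 1, lt_of_le_of_lt (Nat.sub_le _ _) i.isLt⟩

/-- The image of `x_i` under conjugation by `t`. -/
def gdTarget (d : ℕ) (i : Fin d) : FreeGroup (Fin d ⊕ Unit) :=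
  if i.val = 0 then gdX d i else gdX d i * (gdX d (fpred i))⁻¹

/-- The relators of `G_d`. -/
def gdRels (d : ℕ) : Set (FreeGroup (Fin d ⊕ Unit)) :=
  {r | ∃ i : Fin d, r = gdT d * gdX d i * (gdT d)⁻¹ * (gdTarget d i)⁻¹}

/-- The group `G_d = ⟨x₁, …, x_d, t ∣ t x₁ t⁻¹ = x₁, t x_i t⁻¹ = x_i x_{i-1}⁻¹⟩`. -/
abbrev GD (d : ℕ) := PresentedGroup (gdRels d)

/-- The image of a generator in `G_d`. -/
def gdGen (d : ℕ) (a : Fin d ⊕ Unit) : GD d := PresentedGroup.of a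

/-- The image of the generator `x_{i+1}` in `G_d`. -/
def gdx (d : ℕ) (i : Fin d) : GD d := PresentedGroup.of (Sum.inl i)

/-- The subgroup `F_d` of `G_d` generated by `x₁, …, x_d`. -/
def FD (d : ℕ) : Subgroup (GD d) := Subgroup.closure (Set.range (gdx d))

/-! Moving the letters `t^{±1}` of a word of length `r` in `x₁, …, x_d, t` to the front
writes it as `t^m f`, where `f` is a product of `r` conjugates `t^k x_i^{±1} t^{-k}` with
`|k| ≤ r`. Conjugation by `t` is unipotent on `x₁, …, x_d`, and the recursions
`t^{k+1} x_i t^{-k-1} = (t^k x_i t^{-k}) (t^k x_{i-1} t^{-k})⁻¹` and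
`t^{-k-1} x_i t^{k+1} = (t^{-k} x_i t^k) (t^{-k-1} x_{i-1} t^{k+1})` bound the length of
such a conjugate in `F_d` by `(|k|+1)^{i-1}`. An element of `F_d` has `t`-exponent sum
`m = 0`, so its length in `F_d` is at most `r (r+1)^{d-1} ≤ (2r)^d`. -/

section WordBall

variable {G : Type*} [Group G] {T : Set G} {m n : ℕ} {g h : G}

/-- Unlike `wordLength T g ≤ n`, this is not satisfied via the junk value `sInf ∅ = 0` by
elements outside the subgroup generated by `T`. -/
def wordBall (T : Set G) (n : ℕ) : Set G :=
  {g | ∃ l : List G, l.length ≤ n ∧ (∀ x ∈ l, x ∈ T ∨ x⁻¹ ∈ T) ∧ l.prod = g}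

theorem wordBall_mono (T : Set G) : Monotone (wordBall T) :=
  fun _ _ hmn _ ⟨l, hl, hT, hg⟩ => ⟨l, hl.trans hmn, hT, hg⟩

theorem one_mem_wordBall (T : Set G) (n : ℕ) : (1 : G) ∈ wordBall T n :=
  ⟨[], Nat.zero_le n, by simp, rfl⟩

theorem mem_wordBall_one (hg : g ∈ T) : g ∈ wordBall T 1 :=
  ⟨[g], le_rfl, by simp [hg], by simp⟩

theorem mul_mem_wordBall (hg : g ∈ wordBall T m) (hh : h ∈ wordBall T n) :
    g * h ∈ wordBall T (m + n) := by
  obtain ⟨l, hl, hlT, rfl⟩ := hg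
  obtain ⟨l', hl', hl'T, rfl⟩ := hh
  refine ⟨l ++ l', by simp only [List.length_append]; omega, ?_, List.prod_append⟩
  simpa only [List.mem_append, or_imp, forall_and] using ⟨hlT, hl'T⟩

theorem inv_mem_wordBall (hg : g ∈ wordBall T n) : g⁻¹ ∈ wordBall T n := by
  obtain ⟨l, hl, hlT, rfl⟩ := hg
  refine ⟨(l.map (·⁻¹)).reverse, by simpa using hl, fun x hx => ?_,
    (List.prod_inv_reverse l).symm⟩
  simpa [or_comm] using hlT x⁻¹ (by simpa using hx)

theorem wordBall_subset_closure : wordBall T n ⊆ Subgroup.closure T := by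
  rintro _ ⟨l, -, hlT, rfl⟩
  refine Subgroup.list_prod_mem _ fun x hx => ?_
  rcases hlT x hx with hx | hx
  · exact Subgroup.subset_closure hx
  · simpa using (Subgroup.closure T).inv_mem (Subgroup.subset_closure hx)

theorem wordLength_le_of_mem_wordBall (hg : g ∈ wordBall T n) : wordLength T g ≤ n := by
  obtain ⟨l, hl, hlT, hg⟩ := hg
  exact (Nat.sInf_le ⟨l, rfl, hlT, hg⟩ : wordLength T g ≤ l.length).trans hl

theorem exists_mem_wordBall_of_mem_closure (hg : g ∈ Subgroup.closure T) :
    ∃ n, g ∈ wordBall T n := by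
  induction hg using Subgroup.closure_induction with
  | mem g hg => exact ⟨1, mem_wordBall_one hg⟩
  | one => exact ⟨0, one_mem_wordBall T 0⟩
  | mul g h _ _ ihg ihh =>
    obtain ⟨m, hm⟩ := ihg
    obtain ⟨n, hn⟩ := ihh
    exact ⟨m + n, mul_mem_wordBall hm hn⟩
  | inv g _ ih =>
    obtain ⟨n, hn⟩ := ih
    exact ⟨n, inv_mem_wordBall hn⟩

theorem mem_wordBall_wordLength (hg : g ∈ Subgroup.closure T) :
    g ∈ wordBall T (wordLength T g) := by
  obtain ⟨n, l, -, hlT, hl⟩ := exists_mem_wordBall_of_mem_closure hg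
  obtain ⟨l', hl', hl'T, hg⟩ := Nat.sInf_mem (s := {n | ∃ l : List G, l.length = n ∧
    (∀ x ∈ l, x ∈ T ∨ x⁻¹ ∈ T) ∧ l.prod = g}) ⟨l.length, l, rfl, hlT, hl⟩
  exact ⟨l', hl'.le, hl'T, hg⟩

end WordBall

section Decomposition

variable {G : Type*} [Group G] {S X : Set G} {t : G} {r B : ℕ}

theorem exists_zpow_mul_of_list_prod (hS : S ⊆ insert t X)
    (hconj : ∀ x ∈ X, ∀ m : ℤ, m.natAbs ≤ r → MulAut.conj (t ^ m) x ∈ wordBall X B)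
    (l : List G) (hlr : l.length ≤ r) (hlS : ∀ a ∈ l, a ∈ S ∨ a⁻¹ ∈ S) :
    ∃ m : ℤ, m.natAbs ≤ l.length ∧
      ∃ f ∈ wordBall X (l.length * B), l.prod = t ^ m * f := by
  induction l with
  | nil => exact ⟨0, le_rfl, 1, one_mem_wordBall X _, by simp⟩
  | cons a l ih =>
    simp only [List.length_cons, List.mem_cons, forall_eq_or_imp] at hlr hlS ⊢
    obtain ⟨m, hm, f, hf, hl⟩ := ih (by omega) hlS.2
    rw [List.prod_cons, hl]
    have hB : B + l.length * B = (l.length + 1) * B := by ring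
    have hB' : l.length * B ≤ (l.length + 1) * B := Nat.mul_le_mul_right B l.length.le_succ
    rcases hlS.1 with ha | ha <;> rcases hS ha with ha' | ha'
    · refine ⟨m + 1, by omega, f, wordBall_mono X hB' hf, ?_⟩
      rw [ha', ← mul_assoc, ← zpow_one_add, add_comm]
    · refine ⟨m, by omega, MulAut.conj (t ^ (-m)) a * f, ?_, ?_⟩
      · exact hB ▸ mul_mem_wordBall (hconj a ha' (-m) (by omega)) hf
      · rw [MulAut.conj_apply]; group
    · refine ⟨m - 1, by omega, f, wordBall_mono X hB' hf, ?_⟩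
      rw [inv_eq_iff_eq_inv.mp ha', ← mul_assoc, ← zpow_neg_one, ← zpow_add, add_comm,
        sub_eq_add_neg]
    · refine ⟨m, by omega, MulAut.conj (t ^ (-m)) a * f, ?_, ?_⟩
      · have hc := inv_mem_wordBall (hconj a⁻¹ ha' (-m) (by omega))
        rw [map_inv, inv_inv] at hc
        exact hB ▸ mul_mem_wordBall hc hf
      · rw [MulAut.conj_apply]; group

theorem exists_zpow_mul_of_mem_wordBall (hS : S ⊆ insert t X)
    (hconj : ∀ x ∈ X, ∀ m : ℤ, m.natAbs ≤ r → MulAut.conj (t ^ m) x ∈ wordBall X B)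
    {g : G} (hg : g ∈ wordBall S r) :
    ∃ m : ℤ, ∃ f ∈ wordBall X (r * B), g = t ^ m * f := by
  obtain ⟨l, hlr, hlS, rfl⟩ := hg
  obtain ⟨m, -, f, hf, hl⟩ := exists_zpow_mul_of_list_prod hS hconj l hlr hlS
  exact ⟨m, f, wordBall_mono X (Nat.mul_le_mul_right B hlr) hf, hl⟩

end Decomposition

theorem pow_add_pow_le_succ_pow (a k : ℕ) : a ^ (k + 1) + (a + 1) ^ k ≤ (a + 1) ^ (k + 1) := by
  calc a ^ (k + 1) + (a + 1) ^ k = a * a ^ k + (a + 1) ^ k := by rw [pow_succ']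
    _ ≤ a * (a + 1) ^ k + (a + 1) ^ k := by gcongr; omega
    _ = (a + 1) ^ (k + 1) := by ring

section GD

variable {d : ℕ}

def gdt (d : ℕ) : GD d := gdGen d (Sum.inr ())

theorem conj_gdt_gdx (i : Fin d) :
    MulAut.conj (gdt d) (gdx d i) = PresentedGroup.mk (gdRels d) (gdTarget d i) :=
  PresentedGroup.mk_eq_mk_of_mul_inv_mem ⟨i, rfl⟩

theorem conj_gdt_gdx_zero (hd : 0 < d) :
    MulAut.conj (gdt d) (gdx d ⟨0, hd⟩) = gdx d ⟨0, hd⟩ := by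
  rw [conj_gdt_gdx, gdTarget, if_pos rfl]; rfl

theorem conj_gdt_gdx_succ {k : ℕ} (hk : k + 1 < d) :
    MulAut.conj (gdt d) (gdx d ⟨k + 1, hk⟩) =
      gdx d ⟨k + 1, hk⟩ * (gdx d ⟨k, by omega⟩)⁻¹ := by
  rw [conj_gdt_gdx, gdTarget, if_neg k.succ_ne_zero, map_mul, map_inv]; rfl

theorem conj_gdt_inv_gdx_zero (hd : 0 < d) :
    MulAut.conj (gdt d)⁻¹ (gdx d ⟨0, hd⟩) = gdx d ⟨0, hd⟩ := by
  conv_lhs => rw [← conj_gdt_gdx_zero hd]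
  rw [map_inv, MulAut.inv_apply_self]

theorem conj_gdt_inv_gdx_succ {k : ℕ} (hk : k + 1 < d) :
    MulAut.conj (gdt d)⁻¹ (gdx d ⟨k + 1, hk⟩) =
      gdx d ⟨k + 1, hk⟩ * MulAut.conj (gdt d)⁻¹ (gdx d ⟨k, by omega⟩) := by
  calc MulAut.conj (gdt d)⁻¹ (gdx d ⟨k + 1, hk⟩)
      = MulAut.conj (gdt d)⁻¹ (gdx d ⟨k + 1, hk⟩ * (gdx d ⟨k, by omega⟩)⁻¹) *
          MulAut.conj (gdt d)⁻¹ (gdx d ⟨k, by omega⟩) := by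
        rw [map_mul, map_inv (MulAut.conj (gdt d)⁻¹), inv_mul_cancel_right]
    _ = gdx d ⟨k + 1, hk⟩ * MulAut.conj (gdt d)⁻¹ (gdx d ⟨k, by omega⟩) := by
        rw [← conj_gdt_gdx_succ hk, map_inv, MulAut.inv_apply_self]

theorem conj_gdt_pow_gdx_mem_wordBall (n : ℕ) (i : Fin d) :
    MulAut.conj (gdt d ^ n) (gdx d i) ∈ wordBall (Set.range (gdx d)) ((n + 1) ^ i.val) := by
  induction n generalizing i with
  | zero => simpa using mem_wordBall_one (Set.mem_range_self i)
  | succ n ih =>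
    rw [pow_succ (gdt d), map_mul, MulAut.mul_apply]
    rcases i with ⟨_ | k, hk⟩
    · rw [conj_gdt_gdx_zero hk]
      simpa using ih ⟨0, hk⟩
    · rw [conj_gdt_gdx_succ hk, map_mul, map_inv]
      refine wordBall_mono _ ?_ (mul_mem_wordBall (ih _) (inv_mem_wordBall (ih _)))
      calc (n + 1) ^ (k + 1) + (n + 1) ^ k ≤ (n + 1) ^ (k + 1) + (n + 2) ^ k := by
            gcongr; omega
        _ ≤ (n + 2) ^ (k + 1) := pow_add_pow_le_succ_pow (n + 1) k

theorem conj_gdt_inv_pow_gdx_mem_wordBall (n : ℕ) (i : Fin d) :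
    MulAut.conj ((gdt d)⁻¹ ^ n) (gdx d i) ∈
      wordBall (Set.range (gdx d)) ((n + 1) ^ i.val) := by
  induction n generalizing i with
  | zero => simpa using mem_wordBall_one (Set.mem_range_self i)
  | succ n ih =>
    rcases i with ⟨k, hk⟩
    induction k with
    | zero =>
      rw [pow_succ ((gdt d)⁻¹), map_mul, MulAut.mul_apply, conj_gdt_inv_gdx_zero hk]
      simpa using ih ⟨0, hk⟩
    | succ k ihk =>
      rw [pow_succ ((gdt d)⁻¹), map_mul, MulAut.mul_apply, conj_gdt_inv_gdx_succ hk, map_mul,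
        ← MulAut.mul_apply, ← map_mul, ← pow_succ]
      exact wordBall_mono _ (pow_add_pow_le_succ_pow (n + 1) k)
        (mul_mem_wordBall (ih ⟨k + 1, hk⟩) (ihk (by omega)))

theorem conj_gdt_zpow_gdx_mem_wordBall (m : ℤ) (i : Fin d) :
    MulAut.conj (gdt d ^ m) (gdx d i) ∈
      wordBall (Set.range (gdx d)) ((m.natAbs + 1) ^ (d - 1)) := by
  refine wordBall_mono _ (Nat.pow_le_pow_right m.natAbs.succ_pos (by omega : i.val ≤ d - 1)) ?_
  rcases m.eq_nat_or_neg with ⟨n, rfl | rfl⟩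
  · simpa using conj_gdt_pow_gdx_mem_wordBall n i
  · simpa [zpow_neg, inv_pow] using conj_gdt_inv_pow_gdx_mem_wordBall n i

end GD

section Distortion

variable {d : ℕ}

def gdtExponent (d : ℕ) : GD d →* Multiplicative ℤ :=
  PresentedGroup.toGroup (f := Sum.elim 1 fun _ => Multiplicative.ofAdd 1) <| by
    rintro _ ⟨i, rfl⟩
    by_cases hi : i.val = 0 <;> simp [gdT, gdX, gdTarget, hi]

theorem FD_le_ker_gdtExponent : FD d ≤ (gdtExponent d).ker := by
  rw [FD, Subgroup.closure_le]
  rintro _ ⟨i, rfl⟩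
  exact PresentedGroup.toGroup.of _

theorem eq_zero_of_gdt_zpow_mem_FD {m : ℤ} (h : gdt d ^ m ∈ FD d) : m = 0 := by
  simpa [gdtExponent, gdt, gdGen, PresentedGroup.toGroup.of] using FD_le_ker_gdtExponent h

theorem closure_range_gdGen : Subgroup.closure (Set.range (gdGen d)) = ⊤ :=
  PresentedGroup.closure_range_of _

theorem range_gdGen_subset : Set.range (gdGen d) ⊆ insert (gdt d) (Set.range (gdx d)) := by
  rintro _ ⟨_ | _, rfl⟩
  · exact Or.inr ⟨_, rfl⟩
  · exact Or.inl rfl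

theorem wordLength_gdx_le {g : GD d} (hg : g ∈ FD d) {r : ℕ}
    (hr : wordLength (Set.range (gdGen d)) g ≤ r) :
    wordLength (Set.range (gdx d)) g ≤ r * (r + 1) ^ (d - 1) := by
  have hgr : g ∈ wordBall (Set.range (gdGen d)) r :=
    wordBall_mono _ hr (mem_wordBall_wordLength (closure_range_gdGen ▸ Subgroup.mem_top g))
  have hconj : ∀ x ∈ Set.range (gdx d), ∀ m : ℤ, m.natAbs ≤ r →
      MulAut.conj (gdt d ^ m) x ∈ wordBall (Set.range (gdx d)) ((r + 1) ^ (d - 1)) := by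
    rintro _ ⟨i, rfl⟩ m hm
    exact wordBall_mono _ (Nat.pow_le_pow_left (by omega) _)
      (conj_gdt_zpow_gdx_mem_wordBall m i)
  obtain ⟨m, f, hf, rfl⟩ := exists_zpow_mul_of_mem_wordBall range_gdGen_subset hconj hgr
  have hfF : f ∈ FD d := wordBall_subset_closure hf
  obtain rfl : m = 0 :=
    eq_zero_of_gdt_zpow_mem_FD (by simpa using (FD d).mul_mem hg ((FD d).inv_mem hfF))
  simpa using wordLength_le_of_mem_wordBall hf

theorem mul_succ_pow_pred_le (r d : ℕ) : r * (r + 1) ^ (d - 1) ≤ (2 * r) ^ d + r := by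
  rcases d with _ | d
  · simp
  rcases r with _ | r
  · simp
  calc (r + 1) * (r + 2) ^ d ≤ (2 * (r + 1)) * (2 * (r + 1)) ^ d := by gcongr <;> omega
    _ ≤ (2 * (r + 1)) ^ (d + 1) + (r + 1) := by rw [← pow_succ']; omega

end Distortion

theorem stmt12_general (d : ℕ) :
    Dominated (distortion (Set.range (gdGen d)) (Set.range (gdx d)) (FD d))
      (fun n => n ^ d) := by
  refine ⟨1, 2, 1, 0, one_pos, two_pos, one_pos, fun r _ => ?_⟩
  calc distortion (Set.range (gdGen d)) (Set.range (gdx d)) (FD d) r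
      ≤ r * (r + 1) ^ (d - 1) := csSup_le' <| by
        rintro _ ⟨g, hg, hr, rfl⟩
        exact wordLength_gdx_le hg hr
    _ ≤ 1 * (2 * r) ^ d + 1 * r := by simpa using mul_succ_pow_pred_le r d

theorem stmt12 (d : ℕ) (hd : 2 ≤ d) :
    Dominated (distortion (Set.range (gdGen d)) (Set.range (gdx d)) (FD d))
      (fun n => n ^ d) :=
  stmt12_general d
end
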